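/- arXiv:1110.5017 — 2 statements merged into one kernel-verified Lean document; each statement's English description precedes it below -/
import Mathlib

section
/- Let G be a finite simple graph on n vertices with minimum degree δ, and let K be a maximal clique of G all of whose vertices have degree exactly δ in G, with |K| = k ≥ 1. If G_i is any connected component of G − K, with n_i vertices and minimum degree δ_i, then n_i − δ_i ≤ n − δ − 1 (in particular n_i − δ_i < n − δ). -/
open scoped Classical

/-- Let `G` be a finite simple graph on `n` vertices with minimum degree
`δ`, and let `K` be a maximal clique of `G` all of whose vertices have degree exactly `δ`
in `G` (no vertex of degree `δ` outside `K` is adjacent to all vertices of `K`), with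
`|K| = k ≥ 1`.  If `G_i` is a connected component of `G - K`, with `n_i` vertices and
minimum degree `δ_i`, then `n_i - δ_i ≤ n - δ - 1`. -/
theorem component_card_sub_minDegree_lt
    {V : Type*} [Fintype V] [Nonempty V]
    (G : SimpleGraph V)
    (K : Finset V) (hKne : K.Nonempty) (hclique : G.IsClique (K : Set V))
    (hdeg : ∀ v ∈ K, G.degree v = G.minDegree)
    (hmax : ∀ v ∉ K, G.degree v = G.minDegree → ¬ ∀ u ∈ K, G.Adj v u)
    (S : Set V) [Nonempty S]
    (hS : ∃ C : (G.induce {x : V | x ∉ K}).ConnectedComponent,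
      S = Subtype.val '' C.supp) :
    (Fintype.card S : ℤ) - (G.induce S).minDegree ≤
      (Fintype.card V : ℤ) - G.minDegree - 1 := by
  obtain ⟨C, hC⟩ := hS
  have hSK : ∀ x ∈ S, x ∉ K := by
    intro x hx
    rw [hC] at hx
    obtain ⟨a, _, rfl⟩ := hx
    exact a.2
  have hclosed : ∀ v ∈ S, ∀ u, G.Adj v u → u ∉ K → u ∈ S := by
    intro v hv u hadj huK
    rw [hC] at hv ⊢
    obtain ⟨a, haC, ha⟩ := hv
    refine ⟨⟨u, huK⟩, ?_, rfl⟩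
    rw [SimpleGraph.ConnectedComponent.mem_supp_iff] at haC ⊢
    rw [← haC]
    apply SimpleGraph.ConnectedComponent.sound
    apply SimpleGraph.Adj.reachable
    show G.Adj u (a : V)
    rw [ha]; exact hadj.symm
  have hcard : S.toFinset.card + K.card ≤ Fintype.card V := by
    have hdisj : Disjoint S.toFinset K := by
      rw [Finset.disjoint_left]
      intro x hx
      exact hSK x (Set.mem_toFinset.mp hx)
    calc S.toFinset.card + K.card = (S.toFinset ∪ K).card :=
          (Finset.card_union_of_disjoint hdisj).symm
      _ ≤ Fintype.card V := Finset.card_le_univ _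
  obtain ⟨v, hv⟩ := (G.induce S).exists_minimal_degree_vertex
  -- neighbors of v outside K are in S, injecting into induced neighbors
  set N := G.neighborFinset (v : V) with hN
  have h1 : (N \ K).card ≤ (G.induce S).degree v := by
    have : (N \ K) ⊆ ((G.induce S).neighborFinset v).image Subtype.val := by
      intro u hu
      rw [Finset.mem_sdiff, hN, SimpleGraph.mem_neighborFinset] at hu
      have huS : u ∈ S := hclosed (v : V) v.2 u hu.1 hu.2
      refine Finset.mem_image.mpr ⟨⟨u, huS⟩, ?_, rfl⟩
      rw [SimpleGraph.mem_neighborFinset]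
      exact hu.1
    calc (N \ K).card ≤ (((G.induce S).neighborFinset v).image Subtype.val).card :=
          Finset.card_le_card this
      _ ≤ ((G.induce S).neighborFinset v).card := Finset.card_image_le
      _ = (G.induce S).degree v := rfl
  have h2 : (N ∩ K).card + (N \ K).card = G.degree (v : V) := by
    rw [Finset.card_inter_add_card_sdiff]
    rfl
  have hmin : G.minDegree ≤ G.degree (v : V) := G.minDegree_le_degree _
  have hkey : G.minDegree + 1 ≤ (G.induce S).minDegree + K.card := by
    by_cases hall : ∀ u ∈ K, G.Adj (v : V) u
    · have hne : G.degree (v : V) ≠ G.minDegree := fun h =>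
        hmax (v : V) (hSK _ v.2) h hall
      have hNK : (N ∩ K).card ≤ K.card := Finset.card_le_card (Finset.inter_subset_right)
      omega
    · push_neg at hall
      obtain ⟨u, huK, hnadj⟩ := hall
      have hNK : (N ∩ K) ⊆ K.erase u := by
        intro x hx
        rw [Finset.mem_inter] at hx
        refine Finset.mem_erase.mpr ⟨?_, hx.2⟩
        rintro rfl
        exact hnadj (by simpa [hN, SimpleGraph.mem_neighborFinset] using hx.1)
      have hNK' : (N ∩ K).card ≤ K.card - 1 := by
        have := Finset.card_le_card hNK
        rwa [Finset.card_erase_of_mem huK] at this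
      have hK1 : 1 ≤ K.card := Finset.card_pos.mpr hKne
      omega
  have hc : Fintype.card ↥S = S.toFinset.card := (Set.toFinset_card S).symm
  rw [hc, hv]
  omega
end

section
/- For all integers t ≥ 1 and δ with δ ≥ 2t + 1 (so that t < (δ+1)/2), there exists a connected finite simple graph G with minimum degree δ and minimum degree-sum σ₂(G) = 2(δ + 1), together with a maximal clique K of size k = δ − 2t + 1 all of whose vertices have degree exactly δ in G, such that some connected component G_i of the induced subgraph G − K contains two distinct nonadjacent vertices whose degree-sum in G_i equals 4t, and 4t < σ₂(G) − 2(k − 1) = 4t + 2. In particular, the claim that every pair of nonadjacent vertices of a component G_i of G − K has degree-sum at least σ₂(G) − 2(k − 1) in G_i is false. -/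
open scoped Classical

/-- The minimum degree-sum `σ₂(G) = min {d_G(u) + d_G(v) : u ≠ v, uv ∉ E(G)}`. -/
noncomputable def minDegreeSum {V : Type*} [Fintype V] (G : SimpleGraph V) : ℕ :=
  sInf {s | ∃ u v : V, u ≠ v ∧ ¬ G.Adj u v ∧ G.degree u + G.degree v = s}

/-!
The witness is a one-component variant of the paper's graph. A clique `K` of `k = δ - 2t + 1`
vertices is joined to every vertex of an independent set `L` of `2t` vertices, and every vertex
of `L` is joined to the same `2t` vertices `P` of a clique `C ≅ K_{δ+3}`. Vertices of `K` have
degree `δ`, those of `L` degree `δ + 1` and those of `C` at least `δ + 2`, so `K` is a maximal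
clique of minimum-degree vertices and `σ₂(G) = 2(δ + 1)` is attained by two vertices of `L`.
But `G - K` is the connected graph on `L ∪ C`, in which every vertex of `L` has degree `2t` only,
so two of them have degree-sum `4t < σ₂(G) - 2(k - 1) = 4t + 2`.
-/

open SimpleGraph Finset

theorem SimpleGraph.degree_eq_card_of_embedding {W β : Type*} (H : SimpleGraph W)
    (e : W ↪ β) {x : W} [Fintype (H.neighborSet x)] {s : Finset β}
    (hs : ∀ b ∈ s, ∃ y, e y = b)
    (hadj : ∀ y, H.Adj x y ↔ e y ∈ s) : H.degree x = #s := by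
  rw [← card_neighborFinset_eq_degree, ← card_map e]
  congr 1
  ext b
  simp only [mem_map, mem_neighborFinset]
  constructor
  · rintro ⟨y, hy, rfl⟩
    exact (hadj y).1 hy
  · intro hb
    obtain ⟨y, rfl⟩ := hs b hb
    exact ⟨y, (hadj y).2 hb, rfl⟩

theorem minDegreeSum_eq_of_forall_le {V : Type*} [Fintype V] (G : SimpleGraph V) {u v : V}
    (huv : u ≠ v) (hadj : ¬ G.Adj u v)
    (hle : ∀ x y, x ≠ y → ¬ G.Adj x y →
      G.degree u + G.degree v ≤ G.degree x + G.degree y) :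
    minDegreeSum G = G.degree u + G.degree v := by
  have hmem : G.degree u + G.degree v ∈
      {s | ∃ x y : V, x ≠ y ∧ ¬ G.Adj x y ∧ G.degree x + G.degree y = s} :=
    ⟨u, v, huv, hadj, rfl⟩
  refine le_antisymm (Nat.sInf_le hmem) (le_csInf ⟨_, hmem⟩ ?_)
  rintro s ⟨x, y, hxy, hnadj, rfl⟩
  exact hle x y hxy hnadj

theorem SimpleGraph.Preconnected.supp_eq_univ {V : Type*} {G : SimpleGraph V} (h : G.Preconnected)
    (c : G.ConnectedComponent) : c.supp = Set.univ := by
  induction c using ConnectedComponent.ind with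
  | h v => exact Set.eq_univ_of_forall fun x => ConnectedComponent.eq.2 (h x v)

namespace SchiermeyerCounterexample

/-- On the vertices `0, …, N - 1`, the blocks are `K = [0, k)`, `L = [k, k + 2t)`,
`P = [k + 2t, k + 4t)` and `C = [k + 2t, N)`. -/
def Rel (k t x y : ℕ) : Prop :=
  (x < k ∧ y < k + 2 * t) ∨
    (k ≤ x ∧ x < k + 2 * t ∧ k + 2 * t ≤ y ∧ y < k + 4 * t) ∨
    (k + 2 * t ≤ x ∧ k + 2 * t ≤ y)

def graph (k t N : ℕ) : SimpleGraph (Fin N) :=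
  SimpleGraph.fromRel fun x y => Rel k t x y

def cliquePart (k N : ℕ) : Finset (Fin N) :=
  univ.filter fun x => x.val < k

variable {k t N : ℕ}

theorem graph_adj {x y : Fin N} :
    (graph k t N).Adj x y ↔ x.val ≠ y.val ∧ (Rel k t x y ∨ Rel k t y x) := by
  simp [graph, Fin.val_ne_iff]

@[simp]
theorem mem_cliquePart {x : Fin N} : x ∈ cliquePart k N ↔ x.val < k := by
  simp [cliquePart]

theorem card_cliquePart (hk : k ≤ N) : #(cliquePart k N) = k := by
  rw [cliquePart, Fin.card_filter_val_lt, min_eq_right hk]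

theorem isClique_cliquePart : (graph k t N).IsClique (cliquePart k N : Set (Fin N)) := by
  intro x hx y hy hxy
  simp only [mem_coe, mem_cliquePart] at hx hy
  rw [graph_adj, Rel]
  exact ⟨Fin.val_ne_iff.2 hxy, by omega⟩

theorem degree_cases (hN : k + 4 * t ≤ N) (x : Fin N) :
    (x.val < k ∧ (graph k t N).degree x = k + 2 * t - 1) ∨
    (k ≤ x.val ∧ x.val < k + 2 * t ∧ (graph k t N).degree x = k + 2 * t) ∨
    (k + 2 * t ≤ x.val ∧ x.val < k + 4 * t ∧ (graph k t N).degree x = N - k - 1) ∨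
    (k + 4 * t ≤ x.val ∧ (graph k t N).degree x = N - k - 2 * t - 1) := by
  have hx := x.isLt
  have degree_eq (s : Finset ℕ) (hs : ∀ m ∈ s, m < N)
      (hadj : ∀ y : Fin N, (graph k t N).Adj x y ↔ y.val ∈ s) : (graph k t N).degree x = #s :=
    degree_eq_card_of_embedding _ Fin.valEmbedding (fun m hm => ⟨⟨m, hs m hm⟩, rfl⟩) hadj
  rcases lt_or_ge x.val k with h₁ | h₁
  · refine Or.inl ⟨h₁, ?_⟩
    rw [degree_eq ((range (k + 2 * t)).erase x) (by simp; omega) (by simp [graph_adj, Rel]; omega),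
      card_erase_of_mem (by simp; omega), card_range]
  rcases lt_or_ge x.val (k + 2 * t) with h₂ | h₂
  · refine Or.inr (Or.inl ⟨h₁, h₂, ?_⟩)
    rw [degree_eq (range k ∪ Ico (k + 2 * t) (k + 4 * t)) (by simp; omega)
      (by simp [graph_adj, Rel]; omega),
      card_union_of_disjoint (by simp [Finset.disjoint_left]; omega),
      card_range, Nat.card_Ico]
    omega
  rcases lt_or_ge x.val (k + 4 * t) with h₃ | h₃
  · refine Or.inr (Or.inr (Or.inl ⟨h₂, h₃, ?_⟩))
    rw [degree_eq ((Ico k N).erase x) (by simp) (by simp [graph_adj, Rel]; omega),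
      card_erase_of_mem (by simp; omega), Nat.card_Ico]
  · refine Or.inr (Or.inr (Or.inr ⟨h₃, ?_⟩))
    rw [degree_eq ((Ico (k + 2 * t) N).erase x) (by simp) (by simp [graph_adj, Rel]; omega),
      card_erase_of_mem (by simp; omega), Nat.card_Ico]
    omega

theorem degree_of_mem_cliquePart (hN : k + 4 * t ≤ N) {x : Fin N} (hx : x ∈ cliquePart k N) :
    (graph k t N).degree x = k + 2 * t - 1 := by
  rw [mem_cliquePart] at hx
  have := degree_cases (k := k) (t := t) hN x
  omega

theorem degree_ne_of_not_mem_cliquePart (hk : 1 ≤ k) (hN : 2 * k + 4 * t < N) {x : Fin N}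
    (hx : x ∉ cliquePart k N) : (graph k t N).degree x ≠ k + 2 * t - 1 := by
  rw [mem_cliquePart] at hx
  have := degree_cases (k := k) (t := t) (by omega) x
  omega

theorem minDegree_graph (hk : 1 ≤ k) (hN : 2 * k + 4 * t ≤ N) :
    (graph k t N).minDegree = k + 2 * t - 1 := by
  have : Nonempty (Fin N) := ⟨⟨0, by omega⟩⟩
  refine le_antisymm ?_ (le_minDegree_of_forall_le_degree _ _ fun x => ?_)
  · let x₀ : Fin N := ⟨0, by omega⟩
    have h₀ : x₀.val = 0 := rfl
    have := degree_cases (k := k) (t := t) (by omega) x₀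
    have := (graph k t N).minDegree_le_degree x₀
    omega
  · have := degree_cases (k := k) (t := t) (by omega) x
    omega

theorem not_adj_of_mem_L {x y : Fin N} (hx : k ≤ x.val ∧ x.val < k + 2 * t)
    (hy : k ≤ y.val ∧ y.val < k + 2 * t) : ¬ (graph k t N).Adj x y := by
  rw [graph_adj, Rel, Rel]
  omega

theorem minDegreeSum_graph (ht : 1 ≤ t) (hN : 2 * (k + 2 * t) + 2 ≤ N) :
    minDegreeSum (graph k t N) = 2 * (k + 2 * t) := by
  let u : Fin N := ⟨k, by omega⟩
  let v : Fin N := ⟨k + 1, by omega⟩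
  have hu : u.val = k := rfl
  have hv : v.val = k + 1 := rfl
  have := degree_cases (k := k) (t := t) (by omega) u
  have := degree_cases (k := k) (t := t) (by omega) v
  rw [minDegreeSum_eq_of_forall_le _ (u := u) (v := v) (Fin.val_ne_iff.1 (by omega))
    (not_adj_of_mem_L (by omega) (by omega))]
  · omega
  · intro x y hxy hnadj
    rw [graph_adj, Rel, Rel] at hnadj
    have := Fin.val_ne_iff.2 hxy
    have := degree_cases (k := k) (t := t) (by omega) x
    have := degree_cases (k := k) (t := t) (by omega) y
    omega

theorem preconnected_induce_compl_cliquePart (hN : k + 2 * t < N) :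
    ((graph k t N).induce {x | x ∉ cliquePart k N}).Preconnected := by
  let hub : {x : Fin N | x ∉ cliquePart k N} := ⟨⟨k + 2 * t, hN⟩, by simp⟩
  have reach_hub (x : {x : Fin N | x ∉ cliquePart k N}) :
      ((graph k t N).induce {x | x ∉ cliquePart k N}).Reachable x hub := by
    obtain rfl | hx := eq_or_ne x hub
    · rfl
    refine Adj.reachable ?_
    have hxK := x.2
    have hx := Fin.val_ne_iff.2 (Subtype.coe_ne_coe.2 hx)
    simp only [Set.mem_ofPred_eq, mem_cliquePart] at hxK
    simp only [comap_adj, Function.Embedding.subtype_apply, graph_adj, Rel, hub] at hx ⊢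
    omega
  exact fun x y => (reach_hub x).trans (reach_hub y).symm

theorem connected_graph (ht : 1 ≤ t) (hN : k + 2 * t < N) : (graph k t N).Connected := by
  have : Nonempty (Fin N) := ⟨⟨0, by omega⟩⟩
  let w : Fin N := ⟨k, by omega⟩
  have hw : w ∉ cliquePart k N := by simp [w]
  have reach_w (x : Fin N) : (graph k t N).Reachable x w := by
    by_cases hx : x ∈ cliquePart k N
    · refine Adj.reachable ?_
      rw [mem_cliquePart] at hx
      simp only [graph_adj, Rel, w]
      omega
    · exact (preconnected_induce_compl_cliquePart hN ⟨x, hx⟩ ⟨w, hw⟩).map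
        (Embedding.induce _).toHom
  exact ⟨fun x y => (reach_w x).trans (reach_w y).symm⟩

theorem degree_induce_of_mem_L {S : Set (Fin N)} (hS : ∀ x, x ∈ S ↔ k ≤ x.val)
    (hN : k + 4 * t ≤ N) (x : S) (hx : x.val.val < k + 2 * t) :
    ((graph k t N).induce S).degree x = 2 * t := by
  have hxS := (hS x).1 x.2
  rw [degree_eq_card_of_embedding _ ((Function.Embedding.subtype _).trans Fin.valEmbedding)
    (s := Ico (k + 2 * t) (k + 4 * t)), Nat.card_Ico]
  · omega
  · intro m hm
    rw [mem_Ico] at hm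
    exact ⟨⟨⟨m, by omega⟩, (hS _).2 (by simp only; omega)⟩, rfl⟩
  · intro y
    have hyS := (hS y).1 y.2
    simp only [comap_adj, Function.Embedding.subtype_apply, Function.Embedding.trans_apply,
      Fin.valEmbedding_apply, graph_adj, Rel, mem_Ico]
    omega

end SchiermeyerCounterexample

open SchiermeyerCounterexample in
/-- For all integers `t ≥ 1` and `δ ≥ 2t + 1`, there is a connected finite
simple graph `G` with minimum degree `δ` and minimum degree-sum `σ₂(G) = 2(δ + 1)`,
together with a maximal clique `K` of size `k = δ - 2t + 1` all of whose vertices have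
degree exactly `δ`, such that some connected component `G_i` of `G - K` contains two
distinct nonadjacent vertices whose degree-sum in `G_i` equals `4t`, and
`4t < σ₂(G) - 2(k - 1) = 4t + 2`. -/
theorem exists_counterexample_to_schiermeyer_claim
    (t δ : ℕ) (ht : 1 ≤ t) (hδ : 2 * t + 1 ≤ δ) :
    ∃ (n : ℕ) (G : SimpleGraph (Fin (n + 1))) (K : Finset (Fin (n + 1))),
      G.Connected ∧
      G.minDegree = δ ∧
      minDegreeSum G = 2 * (δ + 1) ∧
      G.IsClique (K : Set (Fin (n + 1))) ∧
      K.card = δ - 2 * t + 1 ∧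
      (∀ v ∈ K, G.degree v = δ) ∧
      (∀ v ∉ K, G.degree v = δ → ¬ ∀ u ∈ K, G.Adj v u) ∧
      ∃ (S : Set (Fin (n + 1)))
        (C : (G.induce {x : Fin (n + 1) | x ∉ K}).ConnectedComponent),
        S = Subtype.val '' C.supp ∧
        ∃ u v : S, u ≠ v ∧ ¬ (G.induce S).Adj u v ∧
          (G.induce S).degree u + (G.induce S).degree v = 4 * t ∧
          (4 * t : ℤ) < (minDegreeSum G : ℤ) - 2 * ((K.card : ℤ) - 1) ∧
          (minDegreeSum G : ℤ) - 2 * ((K.card : ℤ) - 1) = 4 * t + 2 := by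
  set k := δ - 2 * t + 1
  have hδk : δ = k + 2 * t - 1 := by omega
  let n := 2 * (k + 2 * t) + 1
  let S : Set (Fin (n + 1)) := {x | x ∉ cliquePart k (n + 1)}
  have hS : ∀ x, x ∈ S ↔ k ≤ x.val := fun x => by simp [S]
  let u : S := ⟨⟨k, by omega⟩, (hS _).2 le_rfl⟩
  let v : S := ⟨⟨k + 1, by omega⟩, (hS _).2 (by simp)⟩
  have hσ₂ := minDegreeSum_graph (k := k) (N := n + 1) ht le_rfl
  have hK := card_cliquePart (k := k) (N := n + 1) (by omega)
  refine ⟨n, graph k t (n + 1), cliquePart k (n + 1), connected_graph ht (by omega),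
    hδk ▸ minDegree_graph (by omega) (by omega), by omega, isClique_cliquePart, hK,
    fun x hx => hδk ▸ degree_of_mem_cliquePart (by omega) hx,
    fun x hx hδx _ => degree_ne_of_not_mem_cliquePart (by omega) (by omega) hx (hδk ▸ hδx),
    S, ((graph k t (n + 1)).induce S).connectedComponentMk u, ?_, u, v, by simp [u, v],
    not_adj_of_mem_L (x := u.val) (y := v.val) (by simp [u]; omega) (by simp [v]; omega), ?_,
    by omega, by omega⟩
  · rw [(preconnected_induce_compl_cliquePart (by omega)).supp_eq_univ, Set.image_univ,
      Subtype.range_coe]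
  · rw [degree_induce_of_mem_L hS (by omega) u (by simp [u]; omega),
      degree_induce_of_mem_L hS (by omega) v (by simp [v]; omega)]
    ring
end
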